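/- Let n = 1 and 0 ≤ ε < 1, so that r(θ,φ) = 1 + ε sin θ cos φ is the degree-1 sectoral harmonic surface. Let φ₀: I → ℝ be a C² solution of the equatorial reduced geodesic equation φ₀'' + Γ^φ_{φφ}(π/2, φ₀(s))·φ₀'(s)² = 0, so that s ↦ (π/2, φ₀(s)) is a geodesic. Then ξ(s) = sin(φ₀(s)) is a solution of the normal variational equation ξ'' = −(∂_θΓ^θ_{φφ})(π/2, φ₀(s))·φ₀'(s)²·ξ − 2·Γ^θ_{θφ}(π/2, φ₀(s))·φ₀'(s)·ξ'. (This explicit solution witnesses the paper's Theorem 2 that the equatorial normal variational equation on the n = 1 sectoral harmonic surface is solvable in closed form; it arises because the n = 1 surface is a surface of revolution about the x-axis, whose rotational symmetry generates a variation through geodesics whose θ-component along the equator is sin φ₀.) -/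

import Mathlib

noncomputable section
open Real Set

/-- Partial derivative with respect to the first argument (θ). -/
def pθ (f : ℝ → ℝ → ℝ) (t p : ℝ) : ℝ := deriv (fun x => f x p) t

/-- Partial derivative with respect to the second argument (φ). -/
def pφ (f : ℝ → ℝ → ℝ) (t p : ℝ) : ℝ := deriv (fun x => f t x) p

/-- Metric coefficient g_θθ = r_θ² + r² of the surface in polar form r = r(θ,φ). -/
def gθθ (r : ℝ → ℝ → ℝ) (t p : ℝ) : ℝ := (pθ r t p) ^ 2 + (r t p) ^ 2

/-- Metric coefficient g_θφ = g_φθ = r_θ r_φ. -/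
def gθφ (r : ℝ → ℝ → ℝ) (t p : ℝ) : ℝ := pθ r t p * pφ r t p

/-- Metric coefficient g_φφ = r_φ² + r² sin²θ. -/
def gφφ (r : ℝ → ℝ → ℝ) (t p : ℝ) : ℝ := (pφ r t p) ^ 2 + (r t p) ^ 2 * (sin t) ^ 2

/-- Determinant of the first fundamental form. -/
def gdet (r : ℝ → ℝ → ℝ) (t p : ℝ) : ℝ := gθθ r t p * gφφ r t p - (gθφ r t p) ^ 2

/-- Christoffel symbol Γ^θ_{θθ}, computed from Γ^a_{bc} = ½ g^{ad}(∂_c g_{bd} + ∂_b g_{cd} − ∂_d g_{bc})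
with the explicit inverse of the 2×2 metric. -/
def Γθθθ (r : ℝ → ℝ → ℝ) (t p : ℝ) : ℝ :=
  (1 / 2) * ((gφφ r t p / gdet r t p) * pθ (gθθ r) t p
    + (-(gθφ r t p) / gdet r t p) * (2 * pθ (gθφ r) t p - pφ (gθθ r) t p))

/-- Christoffel symbol Γ^θ_{θφ} = Γ^θ_{φθ}. -/
def Γθθφ (r : ℝ → ℝ → ℝ) (t p : ℝ) : ℝ :=
  (1 / 2) * ((gφφ r t p / gdet r t p) * pφ (gθθ r) t p
    + (-(gθφ r t p) / gdet r t p) * pθ (gφφ r) t p)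

/-- Christoffel symbol Γ^θ_{φφ}. -/
def Γθφφ (r : ℝ → ℝ → ℝ) (t p : ℝ) : ℝ :=
  (1 / 2) * ((gφφ r t p / gdet r t p) * (2 * pφ (gθφ r) t p - pθ (gφφ r) t p)
    + (-(gθφ r t p) / gdet r t p) * pφ (gφφ r) t p)

/-- Christoffel symbol Γ^φ_{θθ}. -/
def Γφθθ (r : ℝ → ℝ → ℝ) (t p : ℝ) : ℝ :=
  (1 / 2) * ((-(gθφ r t p) / gdet r t p) * pθ (gθθ r) t p
    + (gθθ r t p / gdet r t p) * (2 * pθ (gθφ r) t p - pφ (gθθ r) t p))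

/-- Christoffel symbol Γ^φ_{θφ} = Γ^φ_{φθ}. -/
def Γφθφ (r : ℝ → ℝ → ℝ) (t p : ℝ) : ℝ :=
  (1 / 2) * ((-(gθφ r t p) / gdet r t p) * pφ (gθθ r) t p
    + (gθθ r t p / gdet r t p) * pθ (gφφ r) t p)

/-- Christoffel symbol Γ^φ_{φφ}. -/
def Γφφφ (r : ℝ → ℝ → ℝ) (t p : ℝ) : ℝ :=
  (1 / 2) * ((-(gθφ r t p) / gdet r t p) * (2 * pφ (gθφ r) t p - pθ (gφφ r) t p)
    + (gθθ r t p / gdet r t p) * pφ (gφφ r) t p)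

/-- `r` is a smooth positive function on (0,π) × ℝ. -/
def SmoothPolar (r : ℝ → ℝ → ℝ) : Prop :=
  ContDiffOn ℝ (⊤ : ℕ∞) (fun q : ℝ × ℝ => r q.1 q.2) (Ioo 0 π ×ˢ univ) ∧
  ∀ t ∈ Ioo 0 π, ∀ p : ℝ, 0 < r t p

/-- The two geodesic equations at parameter value `s` for the curve `(θ, φ)` on the
surface in polar form `r = r(θ,φ)`. -/
def GeodesicEq (r : ℝ → ℝ → ℝ) (θ φ : ℝ → ℝ) (s : ℝ) : Prop :=
  deriv (deriv θ) s + Γθθθ r (θ s) (φ s) * (deriv θ s) ^ 2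
    + 2 * Γθθφ r (θ s) (φ s) * deriv θ s * deriv φ s
    + Γθφφ r (θ s) (φ s) * (deriv φ s) ^ 2 = 0 ∧
  deriv (deriv φ) s + Γφθθ r (θ s) (φ s) * (deriv θ s) ^ 2
    + 2 * Γφθφ r (θ s) (φ s) * deriv θ s * deriv φ s
    + Γφφφ r (θ s) (φ s) * (deriv φ s) ^ 2 = 0

/-- Unit-speed condition g_θθ θ'² + 2 g_θφ θ'φ' + g_φφ φ'² = 1. -/
def UnitSpeed (r : ℝ → ℝ → ℝ) (θ φ : ℝ → ℝ) (s : ℝ) : Prop :=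
  gθθ r (θ s) (φ s) * (deriv θ s) ^ 2
    + 2 * gθφ r (θ s) (φ s) * deriv θ s * deriv φ s
    + gφφ r (θ s) (φ s) * (deriv φ s) ^ 2 = 1

/-- The sectoral harmonic surface of degree `n`: r(θ,φ) = 1 + ε sinⁿθ cos(nφ). -/
def secR (n : ℕ) (ε : ℝ) (t p : ℝ) : ℝ := 1 + ε * (sin t) ^ n * cos (n * p)


section AuxLemmas

variable (ε : ℝ)

lemma secR_one (t p : ℝ) : secR 1 ε t p = 1 + ε * sin t * cos p := by
  simp [secR]

lemma pθ_secR (t p : ℝ) : pθ (secR 1 ε) t p = ε * cos t * cos p := by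
  have hfun : (fun x => secR 1 ε x p) = fun x => 1 + ε * sin x * cos p :=
    funext fun x => secR_one ε x p
  simp only [pθ]
  rw [hfun, ((((Real.hasDerivAt_sin t).const_mul ε).mul_const (cos p)).const_add 1).deriv]

lemma pφ_secR (t p : ℝ) : pφ (secR 1 ε) t p = -(ε * sin t * sin p) := by
  have hfun : (fun x => secR 1 ε t x) = fun x => 1 + ε * sin t * cos x :=
    funext fun x => secR_one ε t x
  simp only [pφ]
  rw [hfun, (((Real.hasDerivAt_cos p).const_mul (ε * sin t)).const_add 1).deriv]
  ring

lemma gθθ_secR (t p : ℝ) : gθθ (secR 1 ε) t p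
    = (ε * cos t * cos p) * (ε * cos t * cos p)
      + (1 + ε * sin t * cos p) * (1 + ε * sin t * cos p) := by
  simp only [gθθ, pθ_secR, secR_one]; ring

lemma gθφ_secR (t p : ℝ) : gθφ (secR 1 ε) t p
    = -(ε * cos t * cos p * (ε * sin t * sin p)) := by
  simp only [gθφ, pθ_secR, pφ_secR]; ring

lemma gφφ_secR (t p : ℝ) : gφφ (secR 1 ε) t p
    = ε * sin t * sin p * (ε * sin t * sin p)
      + (1 + ε * sin t * cos p) * (1 + ε * sin t * cos p) * (sin t * sin t) := by
  simp only [gφφ, pφ_secR, secR_one]; ring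

lemma pφ_gθθ_secR (t p : ℝ) : pφ (gθθ (secR 1 ε)) t p
    = -(2 * ε * ε * cos t * cos t * sin p * cos p)
      - 2 * (1 + ε * sin t * cos p) * ε * sin t * sin p := by
  simp only [pφ]
  rw [show (fun x => gθθ (secR 1 ε) t x)
      = fun x => (ε * cos t * cos x) * (ε * cos t * cos x)
        + (1 + ε * sin t * cos x) * (1 + ε * sin t * cos x) from
    funext fun x => gθθ_secR ε t x]
  have h1 : HasDerivAt (fun x => ε * cos t * cos x) (ε * cos t * -sin p) p :=
    (Real.hasDerivAt_cos p).const_mul (ε * cos t)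
  have h2 : HasDerivAt (fun x => 1 + ε * sin t * cos x) (ε * sin t * -sin p) p :=
    ((Real.hasDerivAt_cos p).const_mul (ε * sin t)).const_add 1
  erw [((h1.mul h1).add (h2.mul h2)).deriv]
  ring

lemma pφ_gθφ_secR (t p : ℝ) : pφ (gθφ (secR 1 ε)) t p
    = -(ε * ε * sin t * cos t * (cos p * cos p - sin p * sin p)) := by
  simp only [pφ]
  rw [show (fun x => gθφ (secR 1 ε) t x)
      = fun x => -(ε * cos t * cos x * (ε * sin t * sin x)) from
    funext fun x => gθφ_secR ε t x]
  have h1 : HasDerivAt (fun x => ε * cos t * cos x) (ε * cos t * -sin p) p :=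
    (Real.hasDerivAt_cos p).const_mul (ε * cos t)
  have h3 : HasDerivAt (fun x => ε * sin t * sin x) (ε * sin t * cos p) p :=
    (Real.hasDerivAt_sin p).const_mul (ε * sin t)
  erw [((h1.mul h3).neg).deriv]
  ring

lemma pθ_gφφ_secR (t p : ℝ) : pθ (gφφ (secR 1 ε)) t p
    = 2 * ε * ε * sin t * cos t * sin p * sin p
      + 2 * (1 + ε * sin t * cos p) * ε * cos t * cos p * (sin t * sin t)
      + 2 * ((1 + ε * sin t * cos p) * (1 + ε * sin t * cos p)) * sin t * cos t := by
  simp only [pθ]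
  rw [show (fun x => gφφ (secR 1 ε) x p)
      = fun x => ε * sin x * sin p * (ε * sin x * sin p)
        + (1 + ε * sin x * cos p) * (1 + ε * sin x * cos p) * (sin x * sin x) from
    funext fun x => gφφ_secR ε x p]
  have h3 : HasDerivAt (fun x => ε * sin x * sin p) (ε * cos t * sin p) t :=
    ((Real.hasDerivAt_sin t).const_mul ε).mul_const (sin p)
  have h2 : HasDerivAt (fun x => 1 + ε * sin x * cos p) (ε * cos t * cos p) t :=
    (((Real.hasDerivAt_sin t).const_mul ε).mul_const (cos p)).const_add 1
  have h4 : HasDerivAt (fun x => sin x) (cos t) t := Real.hasDerivAt_sin t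
  erw [((h3.mul h3).add ((h2.mul h2).mul (h4.mul h4))).deriv]
  simp only [Pi.mul_apply, Pi.add_apply, Pi.sub_apply, Pi.neg_apply, Pi.div_apply, Pi.pow_apply]
  ring

lemma pφ_gφφ_secR (t p : ℝ) : pφ (gφφ (secR 1 ε)) t p
    = 2 * ε * ε * sin t * sin t * sin p * cos p
      - 2 * (1 + ε * sin t * cos p) * ε * sin t * sin p * (sin t * sin t) := by
  simp only [pφ]
  rw [show (fun x => gφφ (secR 1 ε) t x)
      = fun x => ε * sin t * sin x * (ε * sin t * sin x)
        + (1 + ε * sin t * cos x) * (1 + ε * sin t * cos x) * (sin t * sin t) from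
    funext fun x => gφφ_secR ε t x]
  have h3 : HasDerivAt (fun x => ε * sin t * sin x) (ε * sin t * cos p) p :=
    (Real.hasDerivAt_sin p).const_mul (ε * sin t)
  have h2 : HasDerivAt (fun x => 1 + ε * sin t * cos x) (ε * sin t * -sin p) p :=
    ((Real.hasDerivAt_cos p).const_mul (ε * sin t)).const_add 1
  erw [((h3.mul h3).add ((h2.mul h2).mul_const (sin t * sin t))).deriv]
  ring

lemma r0_pos (hε0 : 0 ≤ ε) (hε1 : ε < 1) (p : ℝ) : 0 < 1 + ε * cos p := by
  nlinarith [mul_nonneg hε0 (by linarith [Real.neg_one_le_cos p] : (0:ℝ) ≤ 1 + cos p)]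

lemma D2_pos (hε0 : 0 ≤ ε) (hε1 : ε < 1) (p : ℝ) :
    0 < ε * sin p * (ε * sin p) + (1 + ε * cos p) * (1 + ε * cos p) := by
  have h := r0_pos ε hε0 hε1 p
  nlinarith [mul_self_nonneg (ε * sin p)]

lemma gθθ_eq (p : ℝ) : gθθ (secR 1 ε) (π / 2) p
    = (1 + ε * cos p) * (1 + ε * cos p) := by
  rw [gθθ_secR]; simp only [Real.sin_pi_div_two, Real.cos_pi_div_two]; ring

lemma gθφ_eq (p : ℝ) : gθφ (secR 1 ε) (π / 2) p = 0 := by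
  rw [gθφ_secR]; simp

lemma gφφ_eq (p : ℝ) : gφφ (secR 1 ε) (π / 2) p
    = ε * sin p * (ε * sin p) + (1 + ε * cos p) * (1 + ε * cos p) := by
  rw [gφφ_secR]; simp only [Real.sin_pi_div_two, Real.cos_pi_div_two]; ring

lemma gdet_eq (p : ℝ) : gdet (secR 1 ε) (π / 2) p
    = (1 + ε * cos p) * (1 + ε * cos p)
      * (ε * sin p * (ε * sin p) + (1 + ε * cos p) * (1 + ε * cos p)) := by
  simp only [gdet, gθθ_eq, gθφ_eq, gφφ_eq]; ring

lemma pφ_gθθ_eq (p : ℝ) : pφ (gθθ (secR 1 ε)) (π / 2) p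
    = -(2 * (1 + ε * cos p) * (ε * sin p)) := by
  rw [pφ_gθθ_secR]; simp only [Real.sin_pi_div_two, Real.cos_pi_div_two]; ring

lemma pθ_gφφ_eq (p : ℝ) : pθ (gφφ (secR 1 ε)) (π / 2) p = 0 := by
  rw [pθ_gφφ_secR]; simp

lemma pφ_gθφ_eq (p : ℝ) : pφ (gθφ (secR 1 ε)) (π / 2) p = 0 := by
  rw [pφ_gθφ_secR]; simp

lemma pφ_gφφ_eq (p : ℝ) : pφ (gφφ (secR 1 ε)) (π / 2) p = -(2 * ε * sin p) := by
  rw [pφ_gφφ_secR]; simp only [Real.sin_pi_div_two, Real.cos_pi_div_two]; ring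

lemma Γθθφ_eq (hε0 : 0 ≤ ε) (hε1 : ε < 1) (p : ℝ) :
    Γθθφ (secR 1 ε) (π / 2) p = -(ε * sin p) / (1 + ε * cos p) := by
  have hr0 := r0_pos ε hε0 hε1 p
  have hD2 := D2_pos ε hε0 hε1 p
  simp only [Γθθφ]
  rw [gφφ_eq, gdet_eq, gθφ_eq, pφ_gθθ_eq, pθ_gφφ_eq]
  field_simp
  ring

lemma Γφφφ_eq (hε0 : 0 ≤ ε) (hε1 : ε < 1) (p : ℝ) :
    Γφφφ (secR 1 ε) (π / 2) p
      = -(ε * sin p) / (ε * sin p * (ε * sin p) + (1 + ε * cos p) * (1 + ε * cos p)) := by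
  have hr0 := r0_pos ε hε0 hε1 p
  have hD2 := D2_pos ε hε0 hε1 p
  simp only [Γφφφ]
  rw [gθθ_eq, gdet_eq, gθφ_eq, pφ_gθφ_eq, pθ_gφφ_eq, pφ_gφφ_eq]
  field_simp
  ring

lemma deriv_Γθφφ_eq (hε0 : 0 ≤ ε) (hε1 : ε < 1) (p : ℝ) :
    deriv (fun t => Γθφφ (secR 1 ε) t p) (π / 2)
      = ((ε * cos p) * (ε * cos p) + ε * cos p * (1 + ε * cos p)
            + (1 + ε * cos p) * (1 + ε * cos p))
          / ((1 + ε * cos p) * (1 + ε * cos p))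
        + ε * ε * ε * cos p * (sin p * sin p)
          / ((1 + ε * cos p) * (1 + ε * cos p)
            * (ε * sin p * (ε * sin p) + (1 + ε * cos p) * (1 + ε * cos p))) := by
  have hr0 := r0_pos ε hε0 hε1 p
  have hD2 := D2_pos ε hε0 hε1 p
  have hfun : (fun t => Γθφφ (secR 1 ε) t p)
      = fun t => 1 / 2 *
          (((ε * sin t * sin p * (ε * sin t * sin p)
              + (1 + ε * sin t * cos p) * (1 + ε * sin t * cos p) * (sin t * sin t))
            / (((ε * cos t * cos p) * (ε * cos t * cos p)
                + (1 + ε * sin t * cos p) * (1 + ε * sin t * cos p))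
              * (ε * sin t * sin p * (ε * sin t * sin p)
                + (1 + ε * sin t * cos p) * (1 + ε * sin t * cos p) * (sin t * sin t))
              - -(ε * cos t * cos p * (ε * sin t * sin p))
                * -(ε * cos t * cos p * (ε * sin t * sin p))))
            * (2 * -(ε * ε * sin t * cos t * (cos p * cos p - sin p * sin p))
              - (2 * ε * ε * sin t * cos t * sin p * sin p
                + 2 * (1 + ε * sin t * cos p) * ε * cos t * cos p * (sin t * sin t)
                + 2 * ((1 + ε * sin t * cos p) * (1 + ε * sin t * cos p)) * sin t * cos t))
          + (- -(ε * cos t * cos p * (ε * sin t * sin p))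
              / (((ε * cos t * cos p) * (ε * cos t * cos p)
                  + (1 + ε * sin t * cos p) * (1 + ε * sin t * cos p))
                * (ε * sin t * sin p * (ε * sin t * sin p)
                  + (1 + ε * sin t * cos p) * (1 + ε * sin t * cos p) * (sin t * sin t))
                - -(ε * cos t * cos p * (ε * sin t * sin p))
                  * -(ε * cos t * cos p * (ε * sin t * sin p))))
            * (2 * ε * ε * sin t * sin t * sin p * cos p
              - 2 * (1 + ε * sin t * cos p) * ε * sin t * sin p * (sin t * sin t))) := by
    funext t
    simp only [Γθφφ, gdet, pow_two, gθθ_secR, gθφ_secR, gφφ_secR, pφ_gθφ_secR,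
      pθ_gφφ_secR, pφ_gφφ_secR]
  rw [hfun]
  have hA : HasDerivAt (fun t => ε * cos t * cos p) (ε * -sin (π/2) * cos p) (π/2) :=
    ((Real.hasDerivAt_cos (π/2)).const_mul ε).mul_const (cos p)
  have hB : HasDerivAt (fun t => 1 + ε * sin t * cos p) (ε * cos (π/2) * cos p) (π/2) :=
    (((Real.hasDerivAt_sin (π/2)).const_mul ε).mul_const (cos p)).const_add 1
  have hC : HasDerivAt (fun t => ε * sin t * sin p) (ε * cos (π/2) * sin p) (π/2) :=
    ((Real.hasDerivAt_sin (π/2)).const_mul ε).mul_const (sin p)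
  have hS : HasDerivAt (fun t => sin t) (cos (π/2)) (π/2) := Real.hasDerivAt_sin (π/2)
  have hK : HasDerivAt (fun t => cos t) (-sin (π/2)) (π/2) := Real.hasDerivAt_cos (π/2)
  have Hgθθ := (hA.mul hA).add (hB.mul hB)
  have Hgθφ := (hA.mul hC).neg
  have Hgφφ := (hC.mul hC).add ((hB.mul hB).mul (hS.mul hS))
  have Hgdet := (Hgθθ.mul Hgφφ).sub (Hgθφ.mul Hgθφ)
  have hne : ((ε * cos (π/2) * cos p) * (ε * cos (π/2) * cos p)
        + (1 + ε * sin (π/2) * cos p) * (1 + ε * sin (π/2) * cos p))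
      * (ε * sin (π/2) * sin p * (ε * sin (π/2) * sin p)
        + (1 + ε * sin (π/2) * cos p) * (1 + ε * sin (π/2) * cos p) * (sin (π/2) * sin (π/2)))
      - -(ε * cos (π/2) * cos p * (ε * sin (π/2) * sin p))
        * -(ε * cos (π/2) * cos p * (ε * sin (π/2) * sin p)) ≠ 0 := by
    rw [show ((ε * cos (π/2) * cos p) * (ε * cos (π/2) * cos p)
        + (1 + ε * sin (π/2) * cos p) * (1 + ε * sin (π/2) * cos p))
      * (ε * sin (π/2) * sin p * (ε * sin (π/2) * sin p)
        + (1 + ε * sin (π/2) * cos p) * (1 + ε * sin (π/2) * cos p) * (sin (π/2) * sin (π/2)))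
      - -(ε * cos (π/2) * cos p * (ε * sin (π/2) * sin p))
        * -(ε * cos (π/2) * cos p * (ε * sin (π/2) * sin p))
      = (1 + ε * cos p) * (1 + ε * cos p)
        * (ε * sin p * (ε * sin p) + (1 + ε * cos p) * (1 + ε * cos p)) from by
      simp only [Real.sin_pi_div_two, Real.cos_pi_div_two]; ring]
    exact (mul_pos (mul_pos hr0 hr0) hD2).ne'
  have HpφgθφCF := ((((Real.hasDerivAt_sin (π/2)).const_mul (ε * ε)).mul hK).mul_const
    (cos p * cos p - sin p * sin p)).neg
  have Hterm1 := ((((Real.hasDerivAt_sin (π/2)).const_mul (2 * ε * ε)).mul hK).mul_const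
    (sin p)).mul_const (sin p)
  have Hterm2 := ((((hB.const_mul 2).mul_const ε).mul hK).mul_const (cos p)).mul (hS.mul hS)
  have Hterm3 := (((hB.mul hB).const_mul 2).mul hS).mul hK
  have HpθgφφCF := (Hterm1.add Hterm2).add Hterm3
  have Ht1 := (((Real.hasDerivAt_sin (π/2)).const_mul (2 * ε * ε)).mul hS).mul_const
    (sin p) |>.mul_const (cos p)
  have Ht2 := ((((hB.const_mul 2).mul_const ε).mul hS).mul_const (sin p)).mul (hS.mul hS)
  have HpφgφφCF := Ht1.sub Ht2
  have H := (((Hgφφ.div Hgdet hne).mul ((HpφgθφCF.const_mul 2).sub HpθgφφCF)).add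
    ((Hgθφ.neg.div Hgdet hne).mul HpφgφφCF)).const_mul (1/2)
  erw [H.deriv]
  simp only [Pi.mul_apply, Pi.add_apply, Pi.sub_apply, Pi.neg_apply, Pi.div_apply, Pi.pow_apply]
  simp only [Real.sin_pi_div_two, Real.cos_pi_div_two, mul_zero, zero_mul, mul_one,
    one_mul, neg_zero, zero_add, add_zero, sub_zero, zero_sub, neg_neg, zero_div]
  field_simp
  ring

end AuxLemmas

/-- witness for the paper's Theorem 2. On the degree-1 sectoral harmonic
surface r = 1 + ε sin θ cos φ, for any equatorial planar geodesic (π/2, φ₀(s)), the function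
ξ(s) = sin(φ₀(s)) solves the normal variational equation
ξ'' = −(∂_θΓ^θ_{φφ})(π/2, φ₀)·φ₀'²·ξ − 2·Γ^θ_{θφ}(π/2, φ₀)·φ₀'·ξ'. -/
theorem statement7 (ε : ℝ) (hε0 : 0 ≤ ε) (hε1 : ε < 1)
    (I : Set ℝ) (hI : IsOpen I)
    (φ₀ : ℝ → ℝ) (hφ₀ : ContDiffOn ℝ 2 φ₀ I)
    (hred : ∀ s ∈ I,
      deriv (deriv φ₀) s + Γφφφ (secR 1 ε) (π / 2) (φ₀ s) * (deriv φ₀ s) ^ 2 = 0) :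
    ∀ s ∈ I,
      deriv (deriv (fun u => sin (φ₀ u))) s =
        -(deriv (fun t => Γθφφ (secR 1 ε) t (φ₀ s)) (π / 2)) * (deriv φ₀ s) ^ 2
            * sin (φ₀ s)
          - 2 * Γθθφ (secR 1 ε) (π / 2) (φ₀ s) * deriv φ₀ s
            * deriv (fun u => sin (φ₀ u)) s := by
  intro s hs
  have hφd : ∀ u ∈ I, DifferentiableAt ℝ φ₀ u := fun u hu =>
    (hφ₀.differentiableOn (by norm_num)).differentiableAt (hI.mem_nhds hu)
  have hφ' : ContDiffOn ℝ 1 (deriv φ₀) I := hφ₀.deriv_of_isOpen hI (by norm_num)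
  have hφ'd : DifferentiableAt ℝ (deriv φ₀) s :=
    (hφ'.differentiableOn one_ne_zero).differentiableAt (hI.mem_nhds hs)
  have hξ1 : ∀ u ∈ I, deriv (fun v => sin (φ₀ v)) u = cos (φ₀ u) * deriv φ₀ u := fun u hu =>
    ((Real.hasDerivAt_sin (φ₀ u)).comp u ((hφd u hu).hasDerivAt)).deriv
  have hEq : deriv (fun v => sin (φ₀ v)) =ᶠ[nhds s] fun u => cos (φ₀ u) * deriv φ₀ u :=
    Filter.eventually_of_mem (hI.mem_nhds hs) hξ1
  have H2 : HasDerivAt (fun u => cos (φ₀ u) * deriv φ₀ u)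
      (-sin (φ₀ s) * deriv φ₀ s * deriv φ₀ s + cos (φ₀ s) * deriv (deriv φ₀) s) s :=
    (((Real.hasDerivAt_cos (φ₀ s)).comp s ((hφd s hs).hasDerivAt))).mul hφ'd.hasDerivAt
  have key : deriv (deriv (fun u => sin (φ₀ u))) s
      = -sin (φ₀ s) * deriv φ₀ s * deriv φ₀ s + cos (φ₀ s) * deriv (deriv φ₀) s := by
    rw [hEq.deriv_eq]; exact H2.deriv
  have hdd : deriv (deriv φ₀) s
      = -(Γφφφ (secR 1 ε) (π / 2) (φ₀ s) * (deriv φ₀ s) ^ 2) := by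
    have h := hred s hs; linarith
  have hr0 := r0_pos ε hε0 hε1 (φ₀ s)
  have hD2 := D2_pos ε hε0 hε1 (φ₀ s)
  rw [key, hξ1 s hs, hdd, Γφφφ_eq ε hε0 hε1 (φ₀ s), Γθθφ_eq ε hε0 hε1 (φ₀ s),
    deriv_Γθφφ_eq ε hε0 hε1 (φ₀ s)]
  have hD2' : sin (φ₀ s) ^ 2 * ε ^ 2 + (1 + cos (φ₀ s) * ε) ^ 2 ≠ 0 := by nlinarith
  have hr0' : 1 + cos (φ₀ s) * ε ≠ 0 := by nlinarith
  field_simp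
  ring
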